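/- There exists a constant C > 0, depending only on I, the potentials ψ_1,…,ψ_I and the coefficients ν_ij (but not on σ), such that for every σ ∈ (0,1] and every solution (n_1,…,n_I) of (FP_σ), the phase functions R_i^σ := −σ ln n_i satisfy Σ_{i,j=1}^I ∫_0^1 (R_j^σ(x) − R_i^σ(x))² dx ≤ C σ. -/

import Mathlib

open Real Set MeasureTheory Filter

/-!
The logarithmic derivative `w = n_i' / n_i` solves the Riccati equation
`σ w' = -σ w² - ψ_i'' - ψ_i' w + ν_ii - ∑_{j ≠ i} ν_ij n_j / n_i`, with `σ w = -ψ_i'` at the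
boundary. With `K` bounding `ψ_i'`, `ψ_i''`, `ν_ii` and `1 / ν_ij`, the derivative of `w` is
negative wherever `|w| = (2K + 1) / σ`, so a barrier argument gives `|w| ≤ (2K + 1) / σ` and
`log n_j - log n_i` is `O(1/σ)`-Lipschitz. Integrating the Riccati equation and completing the
square bounds `σ ∫ n_j / n_i` by a constant. A function with Lipschitz constant `L` stays within
`1` of its value at `x` on a window of length `1 / L`, so `exp (log n_j - log n_i - 1) ≤ C / σ²`,
i.e. `|log n_j - log n_i| ≤ c + 2 |log σ|`, and `σ² (c + 2 |log σ|)² = O(σ)`.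
-/

/-- A solution of the Fokker–Planck system (FP_σ): `n i` are C², strictly positive
on `[0,1]`, satisfy the elliptic system in `(0,1)` and the zero-flux boundary
conditions at `0` and `1`. -/
def IsFPSolution {I : ℕ} (ψ : Fin I → ℝ → ℝ) (ν : Fin I → Fin I → ℝ)
    (σ : ℝ) (n : Fin I → ℝ → ℝ) : Prop :=
  (∀ i, ContDiff ℝ 2 (n i)) ∧
  (∀ i, ∀ x ∈ Set.Icc (0:ℝ) 1, 0 < n i x) ∧
  (∀ i, ∀ x ∈ Set.Ioo (0:ℝ) 1,
    -σ * deriv (deriv (n i)) x - deriv (fun y => deriv (ψ i) y * n i y) x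
      + ν i i * n i x = ∑ j ∈ Finset.univ.filter (· ≠ i), ν i j * n j x) ∧
  (∀ i, ∀ x ∈ ({0, 1} : Set ℝ), σ * deriv (n i) x + deriv (ψ i) x * n i x = 0)

theorem le_of_hasDerivAt_neg_at_level {w W : ℝ → ℝ} {a b β : ℝ}
    (hw : ∀ x ∈ Icc a b, HasDerivAt w (W x) x) (ha : w a < β)
    (hW : ∀ x ∈ Ioo a b, w x = β → W x < 0) : ∀ x ∈ Icc a b, w x ≤ β := by
  intro x hx
  refine image_le_of_deriv_right_lt_deriv_boundary' (f' := W) (B' := fun _ => 0)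
    (fun y hy => (hw y hy).continuousAt.continuousWithinAt)
    (fun y hy => (hw y (Ico_subset_Icc_self hy)).hasDerivWithinAt) ha.le continuousOn_const
    (fun _ _ => hasDerivWithinAt_const _ _ _) (fun y hy hwy => ?_) hx
  have hya : a ≠ y := by rintro rfl; exact ha.ne hwy
  exact hW y ⟨lt_of_le_of_ne hy.1 hya, hy.2⟩ hwy

theorem abs_le_of_hasDerivAt_neg_at_abs_eq {w W : ℝ → ℝ} {a b β : ℝ}
    (hw : ∀ x ∈ Icc a b, HasDerivAt w (W x) x) (ha : |w a| < β) (hb : |w b| < β)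
    (hW : ∀ x ∈ Ioo a b, |w x| = β → W x < 0) : ∀ x ∈ Icc a b, |w x| ≤ β := by
  have hβ : 0 ≤ β := (abs_nonneg _).trans ha.le
  have hupper := le_of_hasDerivAt_neg_at_level hw (abs_lt.1 ha).2
    fun x hx hwx => hW x hx (by rw [hwx, abs_of_nonneg hβ])
  -- the lower barrier is the upper one for `y ↦ -w (a + b - y)`
  have hlower := le_of_hasDerivAt_neg_at_level (a := a) (b := b) (β := β)
    (w := fun y => -w (a + b - y)) (W := fun y => W (a + b - y))
    (fun y hy => by
      have hd := (hw (a + b - y) ⟨by linarith [hy.2], by linarith [hy.1]⟩).comp_const_sub (a + b) y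
      have hneg : HasDerivAt (fun y => -w (a + b - y)) (-(-W (a + b - y))) y := hd.neg
      rwa [neg_neg] at hneg)
    (by simp only [add_sub_cancel_left]; linarith [(abs_lt.1 hb).1])
    (fun y hy hwy => hW _ ⟨by linarith [hy.2], by linarith [hy.1]⟩
      (by rw [abs_eq hβ]; right; linarith))
  intro x hx
  have := hlower (a + b - x) ⟨by linarith [hx.2], by linarith [hx.1]⟩
  simp only [sub_sub_cancel] at this
  exact abs_le.2 ⟨by linarith, hupper x hx⟩

theorem exp_sub_one_le_mul_integral_exp {G : ℝ → ℝ} {a b : ℝ} {L : NNReal}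
    (hG : LipschitzOnWith L G (Icc a b)) (hL : 1 ≤ L * (b - a)) {x : ℝ} (hx : x ∈ Icc a b) :
    exp (G x - 1) ≤ L * ∫ y in a..b, exp (G y) := by
  have hL0 : (0 : ℝ) < L :=
    lt_of_le_of_ne L.2 fun h => by rw [← h, zero_mul] at hL; linarith
  set δ : ℝ := (L : ℝ)⁻¹ with hδ
  have hδ0 : 0 < δ := inv_pos.2 hL0
  have hδab : δ ≤ b - a := by rw [hδ, inv_le_iff_one_le_mul₀ hL0, mul_comm]; exact hL
  set u := min x (b - δ)
  have hau : a ≤ u := le_min hx.1 (by linarith)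
  have hux : u ≤ x := min_le_left _ _
  have hxu : x - δ ≤ u := le_min (by linarith) (by linarith [hx.2])
  have hvb : u + δ ≤ b := by linarith [min_le_right x (b - δ)]
  have hsub : Icc u (u + δ) ⊆ Icc a b := Icc_subset_Icc hau hvb
  have hexp_int : IntervalIntegrable (fun y => exp (G y)) volume a b :=
    (continuous_exp.comp_continuousOn hG.continuousOn).intervalIntegrable_of_Icc
      (by linarith)
  have hwindow : ∀ y ∈ Icc u (u + δ), exp (G x - 1) ≤ exp (G y) := by
    intro y hy
    have hxy : |y - x| ≤ δ := by
      rw [abs_le]; constructor <;> linarith [hy.1, hy.2]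
    have hd := hG.dist_le_mul y (hsub hy) x hx
    rw [dist_eq, dist_eq] at hd
    have : (L : ℝ) * |y - x| ≤ 1 := by
      calc (L : ℝ) * |y - x| ≤ L * δ := by gcongr
        _ = 1 := mul_inv_cancel₀ hL0.ne'
    exact exp_le_exp.2 (by linarith [(abs_le.1 hd).1])
  have hδint : δ * exp (G x - 1) ≤ ∫ y in u..u + δ, exp (G y) := by
    simpa using intervalIntegral.integral_mono_on (by linarith) intervalIntegrable_const
      (hexp_int.mono_set (by rwa [uIcc_of_le (by linarith), uIcc_of_le (by linarith)]))
      hwindow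
  have hmono : ∫ y in u..u + δ, exp (G y) ≤ ∫ y in a..b, exp (G y) :=
    intervalIntegral.integral_mono_interval hau (by linarith) hvb
      (Eventually.of_forall fun y => (exp_pos _).le) hexp_int
  calc exp (G x - 1) = L * (δ * exp (G x - 1)) := by
        rw [← mul_assoc, mul_inv_cancel₀ hL0.ne', one_mul]
    _ ≤ L * ∫ y in a..b, exp (G y) := by gcongr; exact hδint.trans hmono

theorem sq_mul_sub_two_mul_log_le {σ c : ℝ} (hσ : 0 < σ) (hσ1 : σ ≤ 1) (hc : 0 ≤ c) :
    (σ * (c - 2 * log σ)) ^ 2 ≤ (c + 4) ^ 2 * σ := by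
  set s := √σ
  have hs : 0 < s := sqrt_pos.2 hσ
  have hs1 : s ≤ 1 := sqrt_le_one.2 hσ1
  have hσs : σ = s ^ 2 := (sq_sqrt hσ.le).symm
  have hlog : log σ = 2 * log s := by rw [hσs, log_pow]; norm_num
  have hslog : -(s * log s) < 1 := by
    have := abs_log_mul_self_lt s hs hs1
    linarith [neg_abs_le (log s * s), mul_comm (log s) s]
  have hlogs : log s ≤ 0 := log_nonpos hs.le hs1
  have hlow : 0 ≤ s * c - 4 * (s * log s) := by nlinarith
  have hupp : s * c - 4 * (s * log s) ≤ c + 4 := by nlinarith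
  calc (σ * (c - 2 * log σ)) ^ 2 = (s * c - 4 * (s * log s)) ^ 2 * σ := by
        rw [hlog, hσs]; ring
    _ ≤ (c + 4) ^ 2 * σ := by gcongr

theorem hasDerivAt_logDeriv {f : ℝ → ℝ} (hf : ContDiff ℝ 2 f) {x : ℝ} (hx : f x ≠ 0) :
    HasDerivAt (logDeriv f) (deriv (deriv f) x / f x - logDeriv f x ^ 2) x := by
  have h := (hf.deriv'.differentiable one_ne_zero x).hasDerivAt.div
    ((hf.differentiable two_ne_zero x).hasDerivAt) hx
  refine h.congr_deriv ?_
  rw [logDeriv_apply]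
  field_simp

theorem continuousOn_deriv_logDeriv {f : ℝ → ℝ} (hf : ContDiff ℝ 2 f) {s : Set ℝ}
    (hs : ∀ x ∈ s, f x ≠ 0) :
    ContinuousOn (fun x => deriv (deriv f) x / f x - logDeriv f x ^ 2) s := by
  have hc := hf.continuous.continuousOn (s := s)
  exact ((hf.deriv'.continuous_deriv le_rfl).continuousOn.div hc hs).sub
    (((hf.continuous_deriv one_le_two).continuousOn.div hc hs).pow 2)

structure IsCoeffBound {I : ℕ} (ψ : Fin I → ℝ → ℝ) (ν : Fin I → Fin I → ℝ) (K : ℝ) : Prop where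
  one_le : 1 ≤ K
  abs_deriv_le : ∀ i, ∀ x ∈ Icc (0:ℝ) 1, |deriv (ψ i) x| ≤ K
  abs_deriv_deriv_le : ∀ i, ∀ x ∈ Icc (0:ℝ) 1, |deriv (deriv (ψ i)) x| ≤ K
  diag_le : ∀ i, ν i i ≤ K
  one_le_mul : ∀ i j, i ≠ j → 1 ≤ K * ν i j

theorem exists_isCoeffBound {I : ℕ} {ψ : Fin I → ℝ → ℝ} {ν : Fin I → Fin I → ℝ}
    (hψ : ∀ i, ContDiff ℝ 2 (ψ i)) (hν : ∀ i j, i ≠ j → 0 < ν i j) :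
    ∃ K, IsCoeffBound ψ ν K := by
  have bound : ∀ f : ℝ → ℝ, Continuous f → ∀ᶠ K in atTop, ∀ x ∈ Icc (0:ℝ) 1, |f x| ≤ K := by
    intro f hf
    obtain ⟨C, hC⟩ := isCompact_Icc.exists_bound_of_continuousOn hf.continuousOn
    exact (eventually_ge_atTop C).mono fun K hK x hx => (hC x hx).trans hK
  have h₁ := eventually_all.2 fun i => bound _ ((hψ i).continuous_deriv one_le_two)
  have h₂ := eventually_all.2 fun i => bound _ ((hψ i).deriv'.continuous_deriv le_rfl)
  have h₃ := eventually_all.2 fun i => eventually_ge_atTop (ν i i)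
  have h₄ : ∀ᶠ K in atTop, ∀ i j, i ≠ j → 1 ≤ K * ν i j :=
    eventually_all.2 fun i => eventually_all.2 fun j =>
      (eventually_ge_atTop (ν i j)⁻¹).mono fun K hK hij => by
        have := mul_le_mul_of_nonneg_right hK (hν i j hij).le
        rwa [inv_mul_cancel₀ (hν i j hij).ne'] at this
  obtain ⟨K, hK₀, hK₁, hK₂, hK₃, hK₄⟩ :=
    ((eventually_ge_atTop 1).and (h₁.and (h₂.and (h₃.and h₄)))).exists
  exact ⟨K, hK₀, hK₁, hK₂, hK₃, hK₄⟩

theorem IsCoeffBound.offDiag_pos {I : ℕ} {ψ : Fin I → ℝ → ℝ} {ν : Fin I → Fin I → ℝ} {K : ℝ}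
    (hK : IsCoeffBound ψ ν K) {i j : Fin I} (hij : i ≠ j) : 0 < ν i j := by
  have := hK.one_le_mul i j hij
  by_contra! h
  nlinarith [hK.one_le]

noncomputable def exchangeTerm {I : ℕ} (ν : Fin I → Fin I → ℝ) (n : Fin I → ℝ → ℝ) (i : Fin I)
    (x : ℝ) : ℝ :=
  ∑ j ∈ Finset.univ.filter (· ≠ i), ν i j * (n j x / n i x)

noncomputable def logRatioConst (K : ℝ) : ℝ :=
  1 + log (2 * (2 * K + 1) * (K * (K ^ 2 / 4 + 4 * K)))

theorem logRatioConst_nonneg {K : ℝ} (hK : 1 ≤ K) : 0 ≤ logRatioConst K := by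
  have : 0 ≤ log (2 * (2 * K + 1) * (K * (K ^ 2 / 4 + 4 * K))) := log_nonneg (by nlinarith)
  unfold logRatioConst
  linarith

namespace IsFPSolution

variable {I : ℕ} {ψ : Fin I → ℝ → ℝ} {ν : Fin I → Fin I → ℝ} {σ K : ℝ} {n : Fin I → ℝ → ℝ}
  {i j : Fin I} {x : ℝ}

theorem contDiff (h : IsFPSolution ψ ν σ n) (i : Fin I) : ContDiff ℝ 2 (n i) := h.1 i

theorem pos (h : IsFPSolution ψ ν σ n) (i : Fin I) (hx : x ∈ Icc 0 1) : 0 < n i x := h.2.1 i x hx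

theorem riccati (h : IsFPSolution ψ ν σ n) (hψ : ContDiff ℝ 2 (ψ i)) (hx : x ∈ Ioo 0 1) :
    σ * (deriv (deriv (n i)) x / n i x) = -deriv (deriv (ψ i)) x
      - deriv (ψ i) x * logDeriv (n i) x + ν i i - exchangeTerm ν n i x := by
  have hn := (h.pos i (Ioo_subset_Icc_self hx)).ne'
  have heq := h.2.2.1 i x hx
  have hprod : deriv (fun y => deriv (ψ i) y * n i y) x
      = deriv (deriv (ψ i)) x * n i x + deriv (ψ i) x * deriv (n i) x :=
    ((hψ.deriv'.differentiable one_ne_zero x).hasDerivAt.mul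
      ((h.contDiff i).differentiable two_ne_zero x).hasDerivAt).deriv
  rw [hprod] at heq
  have hsum : exchangeTerm ν n i x * n i x = ∑ j ∈ Finset.univ.filter (· ≠ i), ν i j * n j x := by
    rw [exchangeTerm, Finset.sum_mul]
    exact Finset.sum_congr rfl fun j _ => by field_simp
  rw [logDeriv_apply]
  field_simp
  linear_combination -heq + hsum

theorem mul_logDeriv_eq_of_mem_boundary (h : IsFPSolution ψ ν σ n) (hx : x ∈ ({0, 1} : Set ℝ)) :
    σ * logDeriv (n i) x = -deriv (ψ i) x := by
  have hn : n i x ≠ 0 := (h.pos i (by rcases hx with rfl | rfl <;> norm_num)).ne'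
  rw [logDeriv_apply, mul_div_assoc', div_eq_iff hn]
  linear_combination h.2.2.2 i x hx

theorem exchangeTerm_nonneg (h : IsFPSolution ψ ν σ n) (hK : IsCoeffBound ψ ν K)
    (hx : x ∈ Icc 0 1) : 0 ≤ exchangeTerm ν n i x :=
  Finset.sum_nonneg fun j hj => mul_nonneg (hK.offDiag_pos (Finset.mem_filter.1 hj).2.symm).le
    (div_pos (h.pos j hx) (h.pos i hx)).le

theorem continuousOn_exchangeTerm (h : IsFPSolution ψ ν σ n) :
    ContinuousOn (exchangeTerm ν n i) (Icc 0 1) :=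
  continuousOn_finsetSum _ fun j _ => continuousOn_const.mul
    ((h.contDiff j).continuous.continuousOn.div (h.contDiff i).continuous.continuousOn
      fun _ hx => (h.pos i hx).ne')

theorem abs_logDeriv_le (h : IsFPSolution ψ ν σ n) (hψ : ∀ i, ContDiff ℝ 2 (ψ i))
    (hK : IsCoeffBound ψ ν K) (hσ : σ ∈ Ioc 0 1) (i : Fin I) (hx : x ∈ Icc 0 1) :
    |logDeriv (n i) x| ≤ (2 * K + 1) / σ := by
  obtain ⟨hσ0, hσ1⟩ := hσ
  have hK1 := hK.one_le
  have hbdry : ∀ y ∈ ({0, 1} : Set ℝ), |logDeriv (n i) y| < (2 * K + 1) / σ := by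
    intro y hy
    have hyI : y ∈ Icc (0:ℝ) 1 := by rcases hy with rfl | rfl <;> norm_num
    have hσw : σ * |logDeriv (n i) y| ≤ K := by
      rw [← abs_of_pos hσ0, ← abs_mul, h.mul_logDeriv_eq_of_mem_boundary hy, abs_neg]
      exact hK.abs_deriv_le i y hyI
    rw [lt_div_iff₀ hσ0]
    linarith
  refine abs_le_of_hasDerivAt_neg_at_abs_eq
    (fun y hy => hasDerivAt_logDeriv (h.contDiff i) (h.pos i hy).ne')
    (hbdry 0 (by simp)) (hbdry 1 (by simp)) (fun y hy hwy => ?_) x hx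
  have hyI := Ioo_subset_Icc_self hy
  set β := (2 * K + 1) / σ with hβ
  have hσβ : σ * β = 2 * K + 1 := by rw [hβ]; field_simp
  -- at the level `|w| = β` the quadratic term `-σ w²` of the Riccati equation dominates
  have hdrift : -(deriv (ψ i) y * logDeriv (n i) y) ≤ K * β := by
    calc _ ≤ |deriv (ψ i) y * logDeriv (n i) y| := neg_le_abs _
      _ = |deriv (ψ i) y| * β := by rw [abs_mul, hwy]
      _ ≤ K * β := by gcongr; exact hK.abs_deriv_le i y hyI
  have hsq : logDeriv (n i) y ^ 2 = β ^ 2 := by rw [← sq_abs, hwy]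
  have hσβ1 : 2 * K + 1 ≤ β := by nlinarith
  have key : σ * (deriv (deriv (n i)) y / n i y) < σ * logDeriv (n i) y ^ 2 := by
    rw [h.riccati (hψ i) hy, hsq]
    nlinarith [(abs_le.1 (hK.abs_deriv_deriv_le i y hyI)).1, hK.diag_le i,
      h.exchangeTerm_nonneg hK hyI (i := i)]
  linarith [lt_of_mul_lt_mul_left key hσ0.le]

-- completing the square: `σ K |w| - σ² w² ≤ K² / 4`
theorem mul_exchangeTerm_le (h : IsFPSolution ψ ν σ n) (hψ : ContDiff ℝ 2 (ψ i))
    (hK : IsCoeffBound ψ ν K) (hσ : σ ∈ Ioc 0 1) (hx : x ∈ Ioo 0 1) :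
    σ * exchangeTerm ν n i x ≤ K ^ 2 / 4 + 2 * K
      - σ ^ 2 * (deriv (deriv (n i)) x / n i x - logDeriv (n i) x ^ 2) := by
  obtain ⟨hσ0, hσ1⟩ := hσ
  have hK1 := hK.one_le
  have hxI := Ioo_subset_Icc_self hx
  have hdrift : -(deriv (ψ i) x * logDeriv (n i) x) ≤ K * |logDeriv (n i) x| := by
    calc _ ≤ |deriv (ψ i) x * logDeriv (n i) x| := neg_le_abs _
      _ ≤ K * |logDeriv (n i) x| := by
        rw [abs_mul]; gcongr; exact hK.abs_deriv_le i x hxI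
  have hσric := congrArg (σ * ·) (h.riccati hψ hx)
  nlinarith [sq_nonneg (K - 2 * σ * |logDeriv (n i) x|), sq_abs (logDeriv (n i) x),
    (abs_le.1 (hK.abs_deriv_deriv_le i x hxI)).1, hK.diag_le i,
    mul_le_mul_of_nonneg_left hdrift hσ0.le]

theorem integral_exchangeTerm_le (h : IsFPSolution ψ ν σ n) (hψ : ContDiff ℝ 2 (ψ i))
    (hK : IsCoeffBound ψ ν K) (hσ : σ ∈ Ioc 0 1) :
    σ * ∫ x in (0:ℝ)..1, exchangeTerm ν n i x ≤ K ^ 2 / 4 + 4 * K := by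
  obtain ⟨hσ0, hσ1⟩ := hσ
  have hK1 := hK.one_le
  set W := fun x => deriv (deriv (n i)) x / n i x - logDeriv (n i) x ^ 2
  have hWint : IntervalIntegrable W volume 0 1 :=
    (continuousOn_deriv_logDeriv (h.contDiff i) fun x hx =>
      (h.pos i hx).ne').intervalIntegrable_of_Icc zero_le_one
  have hftc : ∫ x in (0:ℝ)..1, W x = logDeriv (n i) 1 - logDeriv (n i) 0 :=
    intervalIntegral.integral_eq_sub_of_hasDerivAt (fun x hx =>
      hasDerivAt_logDeriv (h.contDiff i) (h.pos i (by rwa [uIcc_of_le zero_le_one] at hx)).ne')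
      hWint
  have hbdry : -(σ ^ 2 * (logDeriv (n i) 1 - logDeriv (n i) 0)) ≤ 2 * K := by
    have h1 := h.mul_logDeriv_eq_of_mem_boundary (i := i) (x := 1) (by simp)
    have h0 := h.mul_logDeriv_eq_of_mem_boundary (i := i) (x := 0) (by simp)
    have hd1 := abs_le.1 (hK.abs_deriv_le i 1 (by norm_num))
    have hd0 := abs_le.1 (hK.abs_deriv_le i 0 (by norm_num))
    have : -(σ ^ 2 * (logDeriv (n i) 1 - logDeriv (n i) 0))
        = σ * (deriv (ψ i) 1 - deriv (ψ i) 0) := by linear_combination -σ * h1 + σ * h0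
    rw [this]
    nlinarith
  calc σ * ∫ x in (0:ℝ)..1, exchangeTerm ν n i x
      = ∫ x in (0:ℝ)..1, σ * exchangeTerm ν n i x := (intervalIntegral.integral_const_mul _ _).symm
    _ ≤ ∫ x in (0:ℝ)..1, (K ^ 2 / 4 + 2 * K - σ ^ 2 * W x) :=
        intervalIntegral.integral_mono_on_of_le_Ioo zero_le_one
          ((h.continuousOn_exchangeTerm.intervalIntegrable_of_Icc zero_le_one).const_mul σ)
          (intervalIntegrable_const.sub (hWint.const_mul _))
          fun x hx => h.mul_exchangeTerm_le hψ hK ⟨hσ0, hσ1⟩ hx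
    _ = K ^ 2 / 4 + 2 * K - σ ^ 2 * (logDeriv (n i) 1 - logDeriv (n i) 0) := by
        rw [intervalIntegral.integral_sub intervalIntegrable_const (hWint.const_mul _),
          intervalIntegral.integral_const_mul, hftc]
        simp
    _ ≤ K ^ 2 / 4 + 4 * K := by linarith

theorem integral_div_le (h : IsFPSolution ψ ν σ n) (hψ : ContDiff ℝ 2 (ψ i))
    (hK : IsCoeffBound ψ ν K) (hσ : σ ∈ Ioc 0 1) (hij : i ≠ j) :
    σ * ∫ x in (0:ℝ)..1, n j x / n i x ≤ K * (K ^ 2 / 4 + 4 * K) := by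
  have hσ0 := hσ.1
  have hdiv_pos : ∀ k, ∀ x ∈ Icc (0:ℝ) 1, 0 < n k x / n i x :=
    fun k x hx => div_pos (h.pos k hx) (h.pos i hx)
  have hdiv_int : IntervalIntegrable (fun x => n j x / n i x) volume 0 1 :=
    ((h.contDiff j).continuous.continuousOn.div (h.contDiff i).continuous.continuousOn
      fun x hx => (h.pos i hx).ne').intervalIntegrable_of_Icc zero_le_one
  have hint_nonneg : 0 ≤ ∫ x in (0:ℝ)..1, n j x / n i x :=
    intervalIntegral.integral_nonneg zero_le_one fun x hx => (hdiv_pos j x hx).le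
  have hsingle : ν i j * ∫ x in (0:ℝ)..1, n j x / n i x
      ≤ ∫ x in (0:ℝ)..1, exchangeTerm ν n i x := by
    rw [← intervalIntegral.integral_const_mul]
    refine intervalIntegral.integral_mono_on zero_le_one (hdiv_int.const_mul _)
      (h.continuousOn_exchangeTerm.intervalIntegrable_of_Icc zero_le_one) fun x hx => ?_
    exact Finset.single_le_sum (f := fun k => ν i k * (n k x / n i x))
      (fun k hk => mul_nonneg (hK.offDiag_pos (Finset.mem_filter.1 hk).2.symm).le
        (hdiv_pos k x hx).le) (by simpa using hij.symm)
  calc σ * ∫ x in (0:ℝ)..1, n j x / n i x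
      ≤ (K * ν i j) * (σ * ∫ x in (0:ℝ)..1, n j x / n i x) :=
        le_mul_of_one_le_left (by positivity) (hK.one_le_mul i j hij)
    _ = K * (σ * (ν i j * ∫ x in (0:ℝ)..1, n j x / n i x)) := by ring
    _ ≤ K * (σ * ∫ x in (0:ℝ)..1, exchangeTerm ν n i x) := by
        gcongr
        · linarith [hK.one_le]
    _ ≤ K * (K ^ 2 / 4 + 4 * K) := by
        gcongr
        · linarith [hK.one_le]
        · exact h.integral_exchangeTerm_le hψ hK hσ

theorem lipschitzOnWith_log_sub_log (h : IsFPSolution ψ ν σ n) (hψ : ∀ i, ContDiff ℝ 2 (ψ i))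
    (hK : IsCoeffBound ψ ν K) (hσ : σ ∈ Ioc 0 1) (i j : Fin I) :
    LipschitzOnWith (2 * (2 * K + 1) / σ).toNNReal (fun y => log (n j y) - log (n i y))
      (Icc 0 1) := by
  have hG : ∀ y ∈ Icc (0:ℝ) 1, HasDerivAt (fun y => log (n j y) - log (n i y))
      (logDeriv (n j) y - logDeriv (n i) y) y :=
    fun y hy =>
      (((h.contDiff j).differentiable two_ne_zero y).hasDerivAt.log (h.pos j hy).ne').sub
        (((h.contDiff i).differentiable two_ne_zero y).hasDerivAt.log (h.pos i hy).ne')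
  have hK1 := hK.one_le
  have hσ0 := hσ.1
  refine (convex_Icc 0 1).lipschitzOnWith_of_nnnorm_hasDerivWithin_le
    (fun y hy => (hG y hy).hasDerivWithinAt) fun y hy => ?_
  rw [← NNReal.coe_le_coe, coe_nnnorm, Real.norm_eq_abs, Real.coe_toNNReal _ (by positivity)]
  calc |logDeriv (n j) y - logDeriv (n i) y|
      ≤ |logDeriv (n j) y| + |logDeriv (n i) y| := abs_sub _ _
    _ ≤ (2 * K + 1) / σ + (2 * K + 1) / σ :=
      add_le_add (h.abs_logDeriv_le hψ hK hσ j hy) (h.abs_logDeriv_le hψ hK hσ i hy)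
    _ = 2 * (2 * K + 1) / σ := by ring

theorem log_sub_log_le (h : IsFPSolution ψ ν σ n) (hψ : ∀ i, ContDiff ℝ 2 (ψ i))
    (hK : IsCoeffBound ψ ν K) (hσ : σ ∈ Ioc 0 1) (hij : i ≠ j) (hx : x ∈ Icc 0 1) :
    log (n j x) - log (n i x) ≤ logRatioConst K - 2 * log σ := by
  obtain ⟨hσ0, hσ1⟩ := hσ
  have hK1 := hK.one_le
  set G := fun y => log (n j y) - log (n i y)
  set L := 2 * (2 * K + 1) / σ with hL
  have hL1 : 1 ≤ L := by rw [hL, le_div_iff₀ hσ0]; linarith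
  have hGlip : LipschitzOnWith L.toNNReal G (Icc 0 1) :=
    h.lipschitzOnWith_log_sub_log hψ hK ⟨hσ0, hσ1⟩ i j
  have hexpG : ∫ y in (0:ℝ)..1, exp (G y) = ∫ y in (0:ℝ)..1, n j y / n i y := by
    refine intervalIntegral.integral_congr fun y hy => ?_
    rw [uIcc_of_le zero_le_one] at hy
    simp only [G, exp_sub, exp_log (h.pos j hy), exp_log (h.pos i hy)]
  have hD := h.integral_div_le (hψ i) hK ⟨hσ0, hσ1⟩ hij
  have hexp : exp (G x - 1) ≤ 2 * (2 * K + 1) * (K * (K ^ 2 / 4 + 4 * K)) / σ ^ 2 := by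
    have hlap := exp_sub_one_le_mul_integral_exp hGlip
      (by rw [Real.coe_toNNReal _ (by linarith), sub_zero, mul_one]; exact hL1) hx
    rw [Real.coe_toNNReal _ (by linarith), hexpG] at hlap
    calc exp (G x - 1) ≤ L * ∫ y in (0:ℝ)..1, n j y / n i y := hlap
      _ = 2 * (2 * K + 1) * (σ * ∫ y in (0:ℝ)..1, n j y / n i y) / σ ^ 2 := by
        rw [hL]; field_simp
      _ ≤ _ := by gcongr
  have hpos : 0 < 2 * (2 * K + 1) * (K * (K ^ 2 / 4 + 4 * K)) := by positivity
  have := (le_log_iff_exp_le (by positivity)).2 hexp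
  rw [log_div hpos.ne' (by positivity), log_pow] at this
  unfold logRatioConst
  push_cast at this
  linarith

theorem integral_sq_phase_sub_le (h : IsFPSolution ψ ν σ n) (hψ : ∀ i, ContDiff ℝ 2 (ψ i))
    (hK : IsCoeffBound ψ ν K) (hσ : σ ∈ Ioc 0 1) (i j : Fin I) :
    ∫ x in (0:ℝ)..1, ((-σ * log (n j x)) - (-σ * log (n i x))) ^ 2
      ≤ (logRatioConst K + 4) ^ 2 * σ := by
  obtain ⟨hσ0, hσ1⟩ := hσ
  have hpt : ∀ x ∈ Icc (0:ℝ) 1,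
      ((-σ * log (n j x)) - (-σ * log (n i x))) ^ 2 ≤ (logRatioConst K + 4) ^ 2 * σ := by
    intro x hx
    have habs : |log (n j x) - log (n i x)| ≤ logRatioConst K - 2 * log σ := by
      rcases eq_or_ne i j with rfl | hij
      · rw [sub_self, abs_zero]
        linarith [logRatioConst_nonneg hK.one_le, log_nonpos hσ0.le hσ1]
      · exact abs_le.2 ⟨by linarith [h.log_sub_log_le hψ hK ⟨hσ0, hσ1⟩ hij.symm hx],
          h.log_sub_log_le hψ hK ⟨hσ0, hσ1⟩ hij hx⟩
    calc ((-σ * log (n j x)) - (-σ * log (n i x))) ^ 2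
        = (σ * |log (n j x) - log (n i x)|) ^ 2 := by rw [mul_pow, sq_abs]; ring
      _ ≤ (σ * (logRatioConst K - 2 * log σ)) ^ 2 := by gcongr
      _ ≤ (logRatioConst K + 4) ^ 2 * σ :=
        sq_mul_sub_two_mul_log_le hσ0 hσ1 (logRatioConst_nonneg hK.one_le)
  have hlog : ∀ k, ContinuousOn (fun x => log (n k x)) (Icc 0 1) := fun k =>
    (h.contDiff k).continuous.continuousOn.log fun x hx => (h.pos k hx).ne'
  have hcont : ContinuousOn (fun x => ((-σ * log (n j x)) - (-σ * log (n i x))) ^ 2) (Icc 0 1) :=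
    ((continuousOn_const.mul (hlog j)).sub (continuousOn_const.mul (hlog i))).pow 2
  simpa using intervalIntegral.integral_mono_on zero_le_one
    (hcont.intervalIntegrable_of_Icc (μ := volume) zero_le_one) intervalIntegrable_const hpt

end IsFPSolution

theorem fp_phase_L2_closeness_general {I : ℕ}
    (ψ : Fin I → ℝ → ℝ) (ν : Fin I → Fin I → ℝ)
    (hψ : ∀ i, ContDiff ℝ 2 (ψ i))
    (hν : ∀ i j, i ≠ j → 0 < ν i j) :
    ∃ C : ℝ, 0 < C ∧ ∀ σ ∈ Set.Ioc (0:ℝ) 1, ∀ n : Fin I → ℝ → ℝ,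
      IsFPSolution ψ ν σ n →
        ∑ i : Fin I, ∑ j : Fin I,
          ∫ x in (0:ℝ)..1,
            ((-σ * Real.log (n j x)) - (-σ * Real.log (n i x))) ^ 2 ≤ C * σ := by
  obtain ⟨K, hK⟩ := exists_isCoeffBound hψ hν
  refine ⟨I ^ 2 * (logRatioConst K + 4) ^ 2 + 1, by positivity, fun σ hσ n hn => ?_⟩
  calc ∑ i : Fin I, ∑ j : Fin I,
        ∫ x in (0:ℝ)..1, ((-σ * log (n j x)) - (-σ * log (n i x))) ^ 2
      ≤ ∑ _i : Fin I, ∑ _j : Fin I, (logRatioConst K + 4) ^ 2 * σ :=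
        Finset.sum_le_sum fun i _ => Finset.sum_le_sum fun j _ =>
          hn.integral_sq_phase_sub_le hψ hK hσ i j
    _ = I ^ 2 * (logRatioConst K + 4) ^ 2 * σ := by
        simp only [Finset.sum_const, Finset.card_univ, Fintype.card_fin, nsmul_eq_mul]
        ring
    _ ≤ (I ^ 2 * (logRatioConst K + 4) ^ 2 + 1) * σ := by linarith [hσ.1]

/-- The phase functions are close to each other in `L²`, uniformly in `σ ∈ (0,1]`:
`∑_{i,j} ∫_0^1 (R_j^σ - R_i^σ)² ≤ C σ` with `C` independent of `σ`. -/
theorem fp_phase_L2_closeness {I : ℕ} [NeZero I]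
    (ψ : Fin I → ℝ → ℝ) (ν : Fin I → Fin I → ℝ)
    (hψ : ∀ i, ContDiff ℝ 2 (ψ i))
    (hψL : ∀ i, ∃ L : NNReal, LipschitzOnWith L (deriv (deriv (ψ i))) (Set.Icc 0 1))
    (hν : ∀ i j, i ≠ j → 0 < ν i j)
    (hνd : ∀ i, ν i i = ∑ j ∈ Finset.univ.filter (· ≠ i), ν j i) :
    ∃ C : ℝ, 0 < C ∧ ∀ σ ∈ Set.Ioc (0:ℝ) 1, ∀ n : Fin I → ℝ → ℝ,
      IsFPSolution ψ ν σ n →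
        ∑ i : Fin I, ∑ j : Fin I,
          ∫ x in (0:ℝ)..1,
            ((-σ * Real.log (n j x)) - (-σ * Real.log (n i x))) ^ 2 ≤ C * σ :=
  fp_phase_L2_closeness_general ψ ν hψ hν
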